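/- arXiv:math/9604242 — 3 statements merged into one kernel-verified Lean document; each statement's English description precedes it below -/
import Mathlib

section
/- Let κ < μ < λ be regular cardinals and let A be a first-order structure with countable language on H(λ) containing ∈, a well-ordering of H(λ), and constants for κ and μ, with Skolem functions closed under composition. If B ≺ A, X ⊆ κ, and B' is the Skolem hull of B ∪ X in A, then sup(B' ∩ μ) = sup(B ∩ μ). -/
/-
The structure on H(λ) is modelled on the ordinals below λ: ∈ and the well-ordering make the
ordinal order definable (the formula `φ`), κ and μ are named by constants, and since the Skolem
functions are closed under composition, the Skolem hull of `B ∪ X` is the substructure it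
generates.

Every `a` in the hull is `t(b, x)` for a term `t`, parameters `b` from `B` and finitely many `x`
below κ. The values `t(b, y) < μ`, with `y` ranging over the `κ ^ n < μ` tuples below κ, are
bounded below μ by regularity of μ. So "some `z < μ` bounds every `t(b, y) < μ` with `y < κ`" is
a true formula with parameters in `B`; by elementarity it has a witness `z ∈ B`, and `a ≤ z`.
-/

open FirstOrder Cardinal Set Ordinal

universe u v w

theorem Cardinal.exists_lt_ord_forall_le_of_isRegular {ι : Type w} {c : Cardinal.{u}}
    (hc : c.IsRegular) (hι : lift.{u} #ι < lift.{w} c) (f : ι → Ordinal.{u}) :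
    ∃ z < c.ord, ∀ i, f i < c.ord → f i ≤ z := by
  classical
  let g : ι → Ordinal.{u} := fun i => if f i < c.ord then f i else 0
  have hg : ∀ i, g i < c.ord := fun i => by
    by_cases h : f i < c.ord
    · simp [g, h]
    · simpa [g, h] using hc.pos
  refine ⟨⨆ i, g i, Ordinal.lift_iSup_lt_of_lt_cof ?_ hg, fun i hi => ?_⟩
  · rwa [← Ordinal.lift_cof, hc.cof_ord]
  · simpa [g, hi] using le_ciSup ⟨c.ord, forall_mem_range.2 fun i => (hg i).le⟩ i

theorem Cardinal.lift_mk_fun_Iio_ord_lt {γ : Type v} [Finite γ] {κ μ : Cardinal.{u}}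
    (hκ : ℵ₀ ≤ κ) (hκμ : κ < μ) :
    lift.{u} #(γ → Iio κ.ord) < lift.{max v (u + 1)} μ := by
  rw [mk_arrow, mk_Iio_ordinal, card_ord, ← Nat.cast_card]
  simp only [lift_natCast, power_natCast]
  refine (lift_le.2 (power_nat_le ?_)).trans_lt ?_
  · simpa using hκ
  · simpa using hκμ

namespace FirstOrder.Language

variable {L : Language} {M : Type*} [L.Structure M]

namespace Substructure

theorem exists_finite_subset_mem_closure {s : Set M} {a : M} (ha : a ∈ closure L s) :
    ∃ F ⊆ s, F.Finite ∧ a ∈ closure L F := by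
  refine closure_induction ha
    (fun x hx => ⟨{x}, singleton_subset_iff.2 hx, finite_singleton x, subset_closure rfl⟩)
    fun f x hx => ?_
  choose F hFs hF hxF using hx
  exact ⟨⋃ i, F i, iUnion_subset hFs, finite_iUnion hF,
    (closure L _).fun_mem f x fun i => closure_mono (subset_iUnion F i) (hxF i)⟩

theorem exists_term_realize_eq_of_mem_closure_union {S X : Set M} {a : M}
    (ha : a ∈ closure L (S ∪ X)) :
    ∃ F ⊆ X, F.Finite ∧ ∃ t : L.Term (S ⊕ F), t.realize (Sum.elim (↑) (↑)) = a := by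
  classical
  obtain ⟨G, hGSX, hG, haG⟩ := exists_finite_subset_mem_closure ha
  have haSG : a ∈ closure L (S ∪ (G \ S)) :=
    closure_mono (fun x hx => (em (x ∈ S)).imp_right fun h => ⟨hx, h⟩) haG
  obtain ⟨t, rfl⟩ := mem_closure_iff_exists_term.1 haSG
  let g : ↥(S ∪ (G \ S)) → S ⊕ ↥(G \ S) := fun u =>
    if h : (u : M) ∈ S then .inl ⟨u, h⟩ else .inr ⟨u, u.2.resolve_left h⟩
  refine ⟨G \ S, fun x hx => (hGSX hx.1).resolve_left hx.2, hG.sdiff, t.relabel g, ?_⟩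
  rw [Term.realize_relabel]
  congr 1
  funext u
  by_cases h : (u : M) ∈ S <;> simp [g, h]

end Substructure

theorem ElementarySubstructure.exists_mem_realize_of_exists_realize
    (B : L.ElementarySubstructure M) {α β : Type*} [Finite β] {ψ : L.Formula (α ⊕ β)}
    {v : α → M} (hv : ∀ i, v i ∈ B) (h : ∃ w : β → M, ψ.Realize (Sum.elim v w)) :
    ∃ w : β → M, (∀ i, w i ∈ B) ∧ ψ.Realize (Sum.elim v w) := by
  let vB : α → B := fun i => ⟨v i, hv i⟩
  have hB : (ψ.iExs β).Realize vB := by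
    rw [← B.subtype.map_formula]
    exact Formula.realize_iExs.2 h
  obtain ⟨w, hw⟩ := Formula.realize_iExs.1 hB
  refine ⟨fun i => w i, fun i => (w i).2, ?_⟩
  rw [← B.subtype.map_formula] at hw
  convert hw using 1
  funext i
  cases i <;> rfl

namespace Formula

variable [LinearOrder M] {φ : L.Formula (Fin 2)}

theorem realize_subst_of_realize_iff_lt (hφ : ∀ a b : M, φ.Realize ![a, b] ↔ a < b)
    {α : Type*} (s t : L.Term α) (v : α → M) :
    Formula.Realize (φ.subst ![s, t]) v ↔ s.realize v < t.realize v := by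
  rw [Formula.Realize, BoundedFormula.realize_subst, ← hφ, Formula.Realize,
    Unique.eq_default (default : Fin 0 → M)]
  congr! 2 with i
  fin_cases i <;> rfl

end Formula

namespace Term

variable {α γ : Type*} [Finite γ]

noncomputable def boundFormula (φ : L.Formula (Fin 2)) (c₁ c₂ : L.Constants)
    (t : L.Term (α ⊕ γ)) : L.Formula (α ⊕ Unit) :=
  let t' : L.Term ((α ⊕ Unit) ⊕ γ) := t.relabel (Sum.map Sum.inl id)
  φ.subst ![var (Sum.inr ()), c₂.term] ⊓
    Formula.iAlls γ
      ((Formula.iInf fun i => φ.subst ![var (Sum.inr i), c₁.term]) ⊓ φ.subst ![t', c₂.term] ⟹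
        (φ.subst ![var (Sum.inl (Sum.inr ())), t']).not)

theorem realize_boundFormula [LinearOrder M] {φ : L.Formula (Fin 2)}
    (hφ : ∀ a b : M, φ.Realize ![a, b] ↔ a < b) (c₁ c₂ : L.Constants) (t : L.Term (α ⊕ γ))
    (x : α → M) (z : Unit → M) :
    (t.boundFormula φ c₁ c₂).Realize (Sum.elim x z) ↔
      z () < c₂ ∧ ∀ y : γ → M, (∀ i, y i < c₁) → t.realize (Sum.elim x y) < c₂ →
        t.realize (Sum.elim x y) ≤ z () := by
  have hv (y : γ → M) : Sum.elim (Sum.elim x z) y ∘ Sum.map Sum.inl id = Sum.elim x y := by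
    funext i; cases i <;> rfl
  simp only [boundFormula, Formula.realize_inf, Formula.realize_iAlls, Formula.realize_imp,
    Formula.realize_iInf, Formula.realize_not, Formula.realize_subst_of_realize_iff_lt hφ,
    realize_var, realize_constants, realize_relabel, hv, not_lt, Sum.elim_inl, Sum.elim_inr,
    and_imp]

end Term

end FirstOrder.Language

open Language in
theorem exists_mem_lt_ord_le_of_mem_closure_union {o : Ordinal.{u}} {L : Language}
    [L.Structure (Iio o)] {κ μ : Cardinal.{u}} (hκ : ℵ₀ ≤ κ) (hμ : μ.IsRegular) (hκμ : κ < μ)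
    {φ : L.Formula (Fin 2)} (hφ : ∀ a b : Iio o, φ.Realize ![a, b] ↔ a < b)
    {cκ cμ : L.Constants} (hcκ : ((cκ : Iio o) : Ordinal) = κ.ord)
    (hcμ : ((cμ : Iio o) : Ordinal) = μ.ord) (B : L.ElementarySubstructure (Iio o))
    {X : Set (Iio o)} (hX : ∀ x ∈ X, (x : Ordinal) < κ.ord) {a : Iio o}
    (ha : a ∈ Substructure.closure L ((B : Set (Iio o)) ∪ X)) (haμ : (a : Ordinal) < μ.ord) :
    ∃ z ∈ B, (z : Ordinal) < μ.ord ∧ (a : Ordinal) ≤ z := by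
  obtain ⟨F, hFX, hF, t, rfl⟩ := Substructure.exists_term_realize_eq_of_mem_closure_union ha
  have := hF.to_subtype
  have hμo : μ.ord < o := hcμ ▸ (cμ : Iio o).2
  have hκo : κ.ord < o := (ord_lt_ord.2 hκμ).trans hμo
  let value (y : F → Iio κ.ord) : Ordinal :=
    (t.realize (Sum.elim (↑) fun i => (⟨y i, (y i).2.trans hκo⟩ : Iio o)) : Iio o)
  obtain ⟨z, hzμ, hz⟩ :=
    exists_lt_ord_forall_le_of_isRegular hμ (lift_mk_fun_Iio_ord_lt hκ hκμ) value
  have hbound : ∃ w : Unit → Iio o, (t.boundFormula φ cκ cμ).Realize (Sum.elim (↑) w) := by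
    refine ⟨fun _ => ⟨z, hzμ.trans hμo⟩,
      (Term.realize_boundFormula hφ _ _ _ _ _).2 ⟨?_, fun y hy hyμ => ?_⟩⟩
    · rw [← Subtype.coe_lt_coe, hcμ]
      exact hzμ
    · rw [← Subtype.coe_lt_coe, hcμ] at hyμ
      exact hz (fun i => ⟨y i, hcκ ▸ hy i⟩) hyμ
  obtain ⟨w, hwB, hw⟩ := B.exists_mem_realize_of_exists_realize (fun b => b.2) hbound
  obtain ⟨hwμ, hw⟩ := (Term.realize_boundFormula hφ _ _ _ _ _).1 hw
  refine ⟨w (), hwB (), hcμ ▸ hwμ, hw (fun i => i.1) (fun i => ?_) ?_⟩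
  · rw [← Subtype.coe_lt_coe, hcκ]
    exact hX _ (hFX i.2)
  · rw [← Subtype.coe_lt_coe, hcμ]
    exact haμ

theorem stmt_0_general
    (κ μ lam : Cardinal) (hκ : κ.IsRegular) (hμ : μ.IsRegular)
    (hκμ : κ < μ)
    (L : Language) [L.Structure ↥(Set.Iio lam.ord)]
    -- the ordinal order (definable from ∈ / the well-ordering ◁) is definable
    (φ : L.Formula (Fin 2))
    (hφ : ∀ a b : ↥(Set.Iio lam.ord),
        φ.Realize ![a, b] ↔ (a : Ordinal) < (b : Ordinal))
    -- constants for κ and μ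
    (cκ cμ : L.Constants)
    (hcκ : ((cκ : ↥(Set.Iio lam.ord)) : Ordinal) = κ.ord)
    (hcμ : ((cμ : ↥(Set.Iio lam.ord)) : Ordinal) = μ.ord)
    (B : L.ElementarySubstructure ↥(Set.Iio lam.ord))
    (X : Set ↥(Set.Iio lam.ord)) (hX : ∀ x ∈ X, (x : Ordinal) < κ.ord) :
    sSup {o : Ordinal | o < μ.ord ∧ ∃ h : o ∈ Set.Iio lam.ord,
        (⟨o, h⟩ : ↥(Set.Iio lam.ord)) ∈
          Language.Substructure.closure L ((B : Set ↥(Set.Iio lam.ord)) ∪ X)}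
      = sSup {o : Ordinal | o < μ.ord ∧ ∃ h : o ∈ Set.Iio lam.ord,
          (⟨o, h⟩ : ↥(Set.Iio lam.ord)) ∈ B} := by
  apply csSup_eq_csSup_of_forall_exists_le
  · rintro o ⟨hoμ, ho, hoB'⟩
    obtain ⟨z, hzB, hzμ, hoz⟩ := exists_mem_lt_ord_le_of_mem_closure_union hκ.aleph0_le hμ hκμ
      hφ hcκ hcμ B hX hoB' hoμ
    exact ⟨z, ⟨hzμ, z.2, hzB⟩, hoz⟩
  · rintro o ⟨hoμ, ho, hoB⟩
    exact ⟨o, ⟨hoμ, ho, Language.Substructure.subset_closure (Or.inl hoB)⟩, le_rfl⟩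

theorem stmt_0
    (κ μ lam : Cardinal) (hκ : κ.IsRegular) (hμ : μ.IsRegular) (hlam : lam.IsRegular)
    (hκμ : κ < μ) (hμlam : μ < lam)
    (L : Language) [Countable (Σ n, L.Functions n)] [Countable (Σ n, L.Relations n)]
    [L.Structure ↥(Set.Iio lam.ord)]
    -- skolemization: every substructure (i.e. Skolem hull) is elementary
    (hskolem : ∀ S : L.Substructure ↥(Set.Iio lam.ord), S.IsElementary)
    -- the ordinal order (definable from ∈ / the well-ordering ◁) is definable
    (φ : L.Formula (Fin 2))
    (hφ : ∀ a b : ↥(Set.Iio lam.ord),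
        φ.Realize ![a, b] ↔ (a : Ordinal) < (b : Ordinal))
    -- constants for κ and μ
    (cκ cμ : L.Constants)
    (hcκ : ((cκ : ↥(Set.Iio lam.ord)) : Ordinal) = κ.ord)
    (hcμ : ((cμ : ↥(Set.Iio lam.ord)) : Ordinal) = μ.ord)
    (B : L.ElementarySubstructure ↥(Set.Iio lam.ord))
    (X : Set ↥(Set.Iio lam.ord)) (hX : ∀ x ∈ X, (x : Ordinal) < κ.ord) :
    sSup {o : Ordinal | o < μ.ord ∧ ∃ h : o ∈ Set.Iio lam.ord,
        (⟨o, h⟩ : ↥(Set.Iio lam.ord)) ∈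
          Language.Substructure.closure L ((B : Set ↥(Set.Iio lam.ord)) ∪ X)}
      = sSup {o : Ordinal | o < μ.ord ∧ ∃ h : o ∈ Set.Iio lam.ord,
          (⟨o, h⟩ : ↥(Set.Iio lam.ord)) ∈ B} :=
  stmt_0_general κ μ lam hκ hμ hκμ L φ hφ cκ cμ hcκ hcμ B X hX
end

section
/- Let n* < ω, X ⊆ ω \ (n*+1), f : X → n*+1, and suppose n*₁ > n* and f₁ : X → n*₁+1 agrees with f on X \ (n*₁+1). If S_f = { x ⊆ ℵ_ω : |x| ≤ ℵ_{n*} ∧ (∀n∈X) cf(x∩ℵ_n)=ℵ_{f(n)} } is stationary in [ℵ_ω]^{<ℵ_{n*+1}}, then S_{f₁} = { x ⊆ ℵ_ω : |x| ≤ ℵ_{n*₁} ∧ (∀n∈X, n > n*₁) cf(x∩ℵ_n)=ℵ_{f₁(n)} } is stationary in [ℵ_ω]^{<ℵ_{n*₁+1}}. -/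
/- Finite variation: Let n* < ω, X ⊆ ω \ (n*+1), f : X → n*+1, n*₁ > n*, and
f₁ : X → n*₁+1 agreeing with f on X \ (n*₁+1).  If
S_f = { x ⊆ ℵ_ω : |x| ≤ ℵ_{n*} ∧ (∀ n ∈ X) cf(x ∩ ℵ_n) = ℵ_{f(n)} } is stationary in
[ℵ_ω]^{<ℵ_{n*+1}}, then
S_{f₁} = { x ⊆ ℵ_ω : |x| ≤ ℵ_{n*₁} ∧ (∀ n ∈ X, n > n*₁) cf(x ∩ ℵ_n) = ℵ_{f₁(n)} }
is stationary in [ℵ_ω]^{<ℵ_{n*₁+1}}. -/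
open Cardinal Set Ordinal

noncomputable def alephOmegaOrd : Ordinal.{0} := (Cardinal.aleph Ordinal.omega0).ord

noncomputable def cofBelow (x : Set Ordinal.{0}) (a : Ordinal.{0}) : Cardinal.{0} :=
  (sSup (x ∩ Set.Iio a)).cof

/-- the set of x ⊆ ℵ_ω with |x| ≤ ℵ_k and cf(x ∩ ℵ_n) = ℵ_{g n} for all n ∈ Y -/
noncomputable def SfGen (k : ℕ) (Y : Set ℕ) (g : ℕ → ℕ) : Set (Set Ordinal.{0}) :=
  {x | x ⊆ Set.Iio alephOmegaOrd ∧
    Cardinal.mk x ≤ Cardinal.lift.{1,0} (Cardinal.aleph k) ∧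
    ∀ n ∈ Y, cofBelow x (Cardinal.aleph n).ord = Cardinal.aleph (g n)}

def IsClubFam (C : Set (Set Ordinal.{0})) (lam : Ordinal.{0}) (mu : Cardinal.{0}) : Prop :=
  (∀ x ∈ C, x ⊆ Set.Iio lam ∧ Cardinal.mk x < Cardinal.lift.{1,0} mu) ∧
  (∀ x : Set Ordinal.{0}, x ⊆ Set.Iio lam → Cardinal.mk x < Cardinal.lift.{1,0} mu →
      ∃ y ∈ C, x ⊆ y) ∧
  (∀ D : Set (Set Ordinal.{0}), D ⊆ C → D.Nonempty → IsChain (· ⊆ ·) D →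
      Cardinal.mk D < Cardinal.lift.{1,0} mu → ⋃₀ D ∈ C)

def IsStatFam (S : Set (Set Ordinal.{0})) (lam : Ordinal.{0}) (mu : Cardinal.{0}) : Prop :=
  ∀ C : Set (Set Ordinal.{0}), IsClubFam C lam mu → (S ∩ C).Nonempty


/-!
Given a club `C` of sets of size `< ℵ_{n*₁+1}`, choose `Φ` with `z ⊆ Φ z ∈ C` and form hulls
`H e ∈ C` of finite sets `e`, monotone in `e`. The countably many finitary operations
`σ_n e = sup (H e ∩ ℵ_n)` generate a club of sets of size `≤ ℵ_{n*}`, so some `x ∈ S_f` is closed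
under them. Then `y = ⋃ {H e | e ⊆ x finite}` lies in `C`, and for `n > n*₁` each element of
`y ∩ ℵ_n` lies below some `σ_n e ∈ x ∩ ℵ_n` (as `ℵ_n` is regular and `|H e| < ℵ_n`), so
`y ∩ ℵ_n` and `x ∩ ℵ_n` have the same supremum.
-/

universe u

theorem Cardinal.mk_biUnion_finset_lt {α ι : Type u} {κ : Cardinal.{u}} (hκ : ℵ₀ ≤ κ)
    (s : Finset ι) {A : ι → Set α} (hA : ∀ i ∈ s, #(A i) < κ) : #(⋃ i ∈ s, A i) < κ := by
  classical
  induction s using Finset.induction_on with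
  | empty => simpa using aleph0_pos.trans_le hκ
  | insert i s _ ih =>
    rw [Finset.set_biUnion_insert]
    exact (mk_union_le _ _).trans_lt <| add_lt_of_lt hκ (hA i (Finset.mem_insert_self i s))
      (ih fun j hj => hA j (Finset.mem_insert_of_mem hj))

theorem Cardinal.mk_finset_le_max (α : Type u) : #(Finset α) ≤ max ℵ₀ #α := by
  classical
  exact (mk_le_of_surjective List.toFinset_surjective).trans (mk_list_le_max α)

section FiniteHull

variable {α : Type u} [DecidableEq α] {Φ : Set α → Set α}

noncomputable def finiteHull (Φ : Set α → Set α) (e : Finset α) : Set α :=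
  Φ (↑e ∪ ⋃ e' ∈ e.ssubsets, finiteHull Φ e')
termination_by e.card
decreasing_by exact Finset.card_lt_card (Finset.mem_ssubsets.1 ‹_›)

theorem subset_finiteHull (hΦ : ∀ z, z ⊆ Φ z) (e : Finset α) : ↑e ⊆ finiteHull Φ e := by
  rw [finiteHull]
  exact subset_union_left.trans (hΦ _)

theorem finiteHull_mono (hΦ : ∀ z, z ⊆ Φ z) : Monotone (finiteHull Φ) := by
  intro e₁ e₂ h
  rcases eq_or_ne e₁ e₂ with rfl | hne
  · rfl
  conv_rhs => rw [finiteHull]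
  exact (subset_biUnion_of_mem (u := fun e' => finiteHull Φ e')
    (Finset.mem_ssubsets.2 (lt_of_le_of_ne h hne))).trans (subset_union_right.trans (hΦ _))

theorem finiteHull_mem {C : Set (Set α)} {B : Set α} {κ : Cardinal.{u}} (hκ : ℵ₀ ≤ κ)
    (hC : ∀ y ∈ C, y ⊆ B ∧ #y < κ) (hΦ : ∀ z ⊆ B, #z < κ → Φ z ∈ C) (e : Finset α)
    (he : ↑e ⊆ B) : finiteHull Φ e ∈ C := by
  induction e using Finset.strongInduction with
  | H e ih =>
  have hsub : ∀ e' ∈ e.ssubsets, finiteHull Φ e' ∈ C := fun e' h' =>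
    ih e' (Finset.mem_ssubsets.1 h') ((Finset.coe_subset.2 (Finset.mem_ssubsets.1 h').1).trans he)
  rw [finiteHull]
  refine hΦ _ (union_subset he (iUnion₂_subset fun e' h' => (hC _ (hsub e' h')).1)) ?_
  exact (mk_union_le _ _).trans_lt <| add_lt_of_lt hκ (e.finite_toSet.lt_aleph0.trans_le hκ)
    (mk_biUnion_finset_lt hκ _ fun e' h' => (hC _ (hsub e' h')).2)

end FiniteHull

def ChainClosed {β : Type u} (C : Set (Set β)) (κ : Cardinal.{u}) : Prop :=
  ∀ D ⊆ C, D.Nonempty → IsChain (· ⊆ ·) D → #D < κ → ⋃₀ D ∈ C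

section UnionOverFinsets

variable {α β : Type u} [LinearOrder α] {H : Finset α → Set β}

def unionOverFinsets (H : Finset α → Set β) (y : Set α) (s : Finset α) : Set β :=
  ⋃ e ∈ {e : Finset α | ↑e ⊆ y}, H (e ∪ s)

theorem unionOverFinsets_mono {y y' : Set α} (h : y ⊆ y') (s : Finset α) :
    unionOverFinsets H y s ⊆ unionOverFinsets H y' s :=
  biUnion_subset_biUnion_left fun _ he => he.trans h

theorem unionOverFinsets_empty (s : Finset α) : unionOverFinsets H ∅ s = H s := by
  simp [unionOverFinsets]

theorem unionOverFinsets_of_isGreatest (hH : Monotone H) {y : Set α} {a : α}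
    (ha : IsGreatest y a) (s : Finset α) :
    unionOverFinsets H y s = unionOverFinsets H (y ∩ Iio a) (insert a s) := by
  apply subset_antisymm
  · refine iUnion₂_subset fun e he => ?_
    refine (hH ?_).trans (subset_biUnion_of_mem (u := fun e => H (e ∪ insert a s))
      (show ↑(e.erase a) ⊆ y ∩ Iio a from fun b hb => ?_))
    · intro b hb
      simp only [Finset.mem_union, Finset.mem_insert, Finset.mem_erase] at hb ⊢
      tauto
    · obtain ⟨hba, hbe⟩ := Finset.mem_erase.1 hb
      exact ⟨he hbe, lt_of_le_of_ne (ha.2 (he hbe)) hba⟩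
  · refine iUnion₂_subset fun e he => ?_
    rw [Finset.union_insert, ← Finset.insert_union]
    refine subset_biUnion_of_mem (u := fun e => H (e ∪ s)) (show ↑(insert a e) ⊆ y from ?_)
    rw [Finset.coe_insert]
    exact insert_subset ha.1 fun b hb => (he hb).1

theorem unionOverFinsets_eq_sUnion {y : Set α} (hne : y.Nonempty)
    (hmax : ∀ a ∈ y, ∃ b ∈ y, a < b) (s : Finset α) :
    unionOverFinsets H y s = ⋃₀ ((fun a => unionOverFinsets H (y ∩ Iio a) s) '' y) := by
  apply subset_antisymm
  · refine iUnion₂_subset fun e he => ?_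
    obtain ⟨b, hby, heb⟩ : ∃ b ∈ y, ∀ c ∈ e, c < b := by
      rcases e.eq_empty_or_nonempty with rfl | hen
      · exact hne.imp fun b hb => ⟨hb, by simp⟩
      · obtain ⟨b, hby, hb⟩ := hmax _ (he (e.max'_mem hen))
        exact ⟨b, hby, fun c hc => (e.le_max' c hc).trans_lt hb⟩
    exact (subset_biUnion_of_mem (u := fun e => H (e ∪ s))
      (show ↑e ⊆ y ∩ Iio b from fun c hc => ⟨he hc, heb c hc⟩)).trans
      (subset_sUnion_of_mem ⟨b, hby, rfl⟩)
  · exact sUnion_subset <| forall_mem_image.2 fun a _ => unionOverFinsets_mono inter_subset_left s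

variable {C : Set (Set β)} {κ : Cardinal.{u}} {x : Set α}

theorem unionOverFinsets_mem_of_forall_Iio (hC : ChainClosed C κ) (hH : Monotone H)
    (hHC : ∀ e : Finset α, ↑e ⊆ x → H e ∈ C) (hx : #x < κ) {y : Set α} (hy : y ⊆ x)
    (ih : ∀ a ∈ y, ∀ s : Finset α, ↑s ⊆ x → unionOverFinsets H (y ∩ Iio a) s ∈ C)
    (s : Finset α) (hs : ↑s ⊆ x) : unionOverFinsets H y s ∈ C := by
  rcases y.eq_empty_or_nonempty with rfl | hne
  · rw [unionOverFinsets_empty]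
    exact hHC s hs
  by_cases hmax : ∃ a, IsGreatest y a
  · obtain ⟨a, ha⟩ := hmax
    rw [unionOverFinsets_of_isGreatest hH ha]
    exact ih a ha.1 _ (by rw [Finset.coe_insert]; exact insert_subset (hy ha.1) hs)
  have hmax' : ∀ a ∈ y, ∃ b ∈ y, a < b := by
    simpa [IsGreatest, upperBounds, not_forall] using hmax
  rw [unionOverFinsets_eq_sUnion hne hmax']
  refine hC _ (forall_mem_image.2 fun a ha => ih a ha s hs) (hne.image _) ?_
    (mk_image_le.trans_lt ((mk_le_mk_of_subset hy).trans_lt hx))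
  rintro _ ⟨a, -, rfl⟩ _ ⟨b, -, rfl⟩ -
  rcases le_total a b with hab | hab
  · exact Or.inl (unionOverFinsets_mono (inter_subset_inter_right _ (Iio_subset_Iio hab)) s)
  · exact Or.inr (unionOverFinsets_mono (inter_subset_inter_right _ (Iio_subset_Iio hab)) s)

/- Only unions of chains are available, so the directed union is reached by induction along the
well-order: a greatest element of `y` is moved into `s`, otherwise `y` is the union of the chain of
its proper initial segments. -/
theorem iUnion_finset_mem_of_chainClosed [WellFoundedLT α] (hC : ChainClosed C κ) (hH : Monotone H)
    (hHC : ∀ e : Finset α, ↑e ⊆ x → H e ∈ C) (hx : #x < κ) :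
    (⋃ e ∈ {e : Finset α | ↑e ⊆ x}, H e) ∈ C := by
  have hIio : ∀ b : α, ∀ s : Finset α, ↑s ⊆ x → unionOverFinsets H (x ∩ Iio b) s ∈ C := by
    intro b
    induction b using WellFoundedLT.induction with
    | _ b ih =>
      refine unionOverFinsets_mem_of_forall_Iio hC hH hHC hx inter_subset_left fun a ha => ?_
      rw [inter_assoc, Iio_inter_Iio, min_eq_right ha.2.le]
      exact ih a ha.2
  simpa [unionOverFinsets] using
    unionOverFinsets_mem_of_forall_Iio hC hH hHC hx subset_rfl (fun a _ => hIio a) ∅ (by simp)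

end UnionOverFinsets

theorem Cardinal.mk_sUnion_le_of_forall_le {α : Type u} {A : Set (Set α)} {μ : Cardinal.{u}}
    (hμ : ℵ₀ ≤ μ) (hA : #A ≤ μ) (h : ∀ s ∈ A, #s ≤ μ) : #(⋃₀ A) ≤ μ :=
  (mk_sUnion_le A).trans (mul_le_of_le hμ hA (ciSup_le' fun s => h s s.2))

section ClosureUnder

variable {α : Type u} (F : ℕ → Finset α → α)

def IsClosedUnder (z : Set α) : Prop :=
  ∀ i (e : Finset α), ↑e ⊆ z → F i e ∈ z

def closureStep (w : Set α) : Set α :=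
  w ∪ range fun p : ℕ × Finset w => F p.1 (p.2.map (Function.Embedding.subtype _))

def closureUnder (z : Set α) : Set α :=
  ⋃ k : ℕ, (closureStep F)^[k] z

variable {F}

theorem subset_closureUnder (z : Set α) : z ⊆ closureUnder F z :=
  subset_iUnion (fun k => (closureStep F)^[k] z) 0

theorem isClosedUnder_closureUnder (z : Set α) : IsClosedUnder F (closureUnder F z) := by
  classical
  have hmono : Monotone fun k => (closureStep F)^[k] z :=
    monotone_nat_of_le_succ fun k => by
      rw [Function.iterate_succ_apply']
      exact subset_union_left
  intro i e he
  obtain ⟨k, hk⟩ := hmono.directed_le.exists_mem_subset_of_finset_subset_biUnion he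
  refine mem_iUnion.2 ⟨k + 1, ?_⟩
  rw [Function.iterate_succ_apply']
  exact Or.inr ⟨(i, e.subtype (· ∈ (closureStep F)^[k] z)), by
    simp only [Finset.subtype_map_of_mem fun a ha => hk ha]⟩

theorem closureUnder_subset {B : Set α} (hF : ∀ i e, F i e ∈ B) {z : Set α} (hz : z ⊆ B) :
    closureUnder F z ⊆ B := by
  refine iUnion_subset fun k => ?_
  induction k with
  | zero => exact hz
  | succ k ih =>
    rw [Function.iterate_succ_apply']
    exact union_subset ih (range_subset_iff.2 fun _ => hF _ _)

theorem mk_closureStep_le {μ : Cardinal.{u}} (hμ : ℵ₀ ≤ μ) {w : Set α} (hw : #w ≤ μ) :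
    #(closureStep F w) ≤ μ := by
  refine (mk_union_le _ _).trans (add_le_of_le hμ hw (mk_range_le.trans ?_))
  rw [mk_prod, mk_nat, lift_aleph0, Cardinal.lift_uzero]
  exact mul_le_of_le hμ hμ ((mk_finset_le_max _).trans (max_le hμ hw))

theorem mk_closureUnder_le {μ : Cardinal.{u}} (hμ : ℵ₀ ≤ μ) {z : Set α} (hz : #z ≤ μ) :
    #(closureUnder F z) ≤ μ := by
  have hk : ∀ k, #((closureStep F)^[k] z) ≤ μ := by
    intro k
    induction k with
    | zero => exact hz
    | succ k ih =>
      rw [Function.iterate_succ_apply']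
      exact mk_closureStep_le hμ ih
  rw [closureUnder, ← sUnion_range]
  exact mk_sUnion_le_of_forall_le hμ ((countable_range _).le_aleph0.trans hμ)
    (forall_mem_range.2 hk)

end ClosureUnder

theorem isClubFam_isClosedUnder (F : ℕ → Finset Ordinal.{0} → Ordinal.{0}) {lam : Ordinal.{0}}
    (hF : ∀ i e, F i e < lam) {μ : Cardinal.{0}} (hμ : ℵ₀ ≤ μ) :
    IsClubFam {z | z ⊆ Iio lam ∧ #z ≤ Cardinal.lift.{1} μ ∧ IsClosedUnder F z} lam
      (Order.succ μ) := by
  have hμ' : ℵ₀ ≤ Cardinal.lift.{1} μ := aleph0_le_lift.2 hμ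
  simp only [IsClubFam, Cardinal.lift_succ, Order.lt_succ_iff]
  refine ⟨fun z hz => ⟨hz.1, hz.2.1⟩, fun z hz hzμ => ?_, fun D hD hne hchain hDμ => ?_⟩
  · exact ⟨closureUnder F z, ⟨closureUnder_subset hF hz, mk_closureUnder_le hμ' hzμ,
      isClosedUnder_closureUnder z⟩, subset_closureUnder z⟩
  refine ⟨sUnion_subset fun d hd => (hD hd).1,
    mk_sUnion_le_of_forall_le hμ' hDμ fun d hd => (hD hd).2.1, fun i e he => ?_⟩
  obtain ⟨d, hd, hed⟩ :=
    hchain.directedOn.exists_mem_subset_of_finite_of_subset_sUnion hne e.finite_toSet he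
  exact subset_sUnion_of_mem hd ((hD hd).2.2 i e hed)

theorem IsClubFam.exists_enlarging {C : Set (Set Ordinal.{0})} {lam : Ordinal.{0}}
    {mu : Cardinal.{0}} (hC : IsClubFam C lam mu) :
    ∃ Φ : Set Ordinal.{0} → Set Ordinal.{0}, (∀ z, z ⊆ Φ z) ∧
      ∀ z ⊆ Iio lam, #z < Cardinal.lift.{1} mu → Φ z ∈ C := by
  obtain ⟨-, hext, -⟩ := hC
  have : ∀ z, ∃ y, z ⊆ y ∧ (z ⊆ Iio lam → #z < Cardinal.lift.{1} mu → y ∈ C) := by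
    intro z
    by_cases h : z ⊆ Iio lam ∧ #z < Cardinal.lift.{1} mu
    · obtain ⟨y, hy, hzy⟩ := hext z h.1 h.2
      exact ⟨y, hzy, fun _ _ => hy⟩
    · exact ⟨z, subset_rfl, fun h₁ h₂ => absurd ⟨h₁, h₂⟩ h⟩
  choose Φ hΦ hΦC using this
  exact ⟨Φ, hΦ, hΦC⟩

theorem Cardinal.isRegular_aleph_natCast (n : ℕ) : (ℵ_ n).IsRegular := by
  cases n with
  | zero => simpa using isRegular_aleph0
  | succ n => exact_mod_cast isRegular_aleph_add_one n

theorem sSup_inter_Iio_ord_lt {s : Set Ordinal.{u}} {c : Cardinal.{u}} (hc : c.IsRegular)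
    (hs : #s < Cardinal.lift.{u + 1} c) : sSup (s ∩ Iio c.ord) < c.ord := by
  refine Ordinal.sSup_lt_of_lt_cof ?_ fun a ha => ha.2
  rw [← Ordinal.lift_cof, hc.cof_ord]
  exact (mk_le_mk_of_subset inter_subset_left).trans_lt hs

theorem cofBelow_iUnion_eq {x : Set Ordinal.{0}} {H : Finset Ordinal.{0} → Set Ordinal.{0}}
    {c : Ordinal.{0}} (hxH : ∀ a ∈ x, a ∈ H {a})
    (hsup : ∀ e : Finset Ordinal.{0}, ↑e ⊆ x → sSup (H e ∩ Iio c) ∈ x ∧ sSup (H e ∩ Iio c) < c) :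
    cofBelow (⋃ e ∈ {e : Finset Ordinal.{0} | ↑e ⊆ x}, H e) c = cofBelow x c := by
  refine congrArg Ordinal.cof (csSup_eq_csSup_of_forall_exists_le ?_ fun a ha =>
    ⟨a, ⟨mem_iUnion₂.2 ⟨{a}, by simpa using ha.1, hxH a ha.1⟩, ha.2⟩, le_rfl⟩)
  rintro b ⟨hb, hbc⟩
  obtain ⟨e, he, hbe⟩ := mem_iUnion₂.1 hb
  exact ⟨_, hsup e he, le_csSup ⟨c, fun _ ha => ha.2.le⟩ ⟨hbe, hbc⟩⟩

theorem stmt_9_general (nstar nstar1 : ℕ) (X : Set ℕ)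
    (f f1 : ℕ → ℕ)
    (h1 : nstar < nstar1)
    (hagree : ∀ n ∈ X, nstar1 + 1 ≤ n → f1 n = f n)
    (hstat : IsStatFam (SfGen nstar X f) alephOmegaOrd (Cardinal.aleph (nstar + 1))) :
    IsStatFam (SfGen nstar1 {n ∈ X | nstar1 < n} f1) alephOmegaOrd
      (Cardinal.aleph (nstar1 + 1)) := by
  intro C hC
  obtain ⟨Φ, hΦsub, hΦC⟩ := hC.exists_enlarging
  have hull_mem : ∀ e : Finset Ordinal.{0}, ↑e ⊆ Iio alephOmegaOrd → finiteHull Φ e ∈ C :=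
    finiteHull_mem (aleph0_le_lift.2 (aleph0_le_aleph _)) hC.1 hΦC
  let σ (n : ℕ) (e : Finset Ordinal.{0}) : Ordinal.{0} := sSup (finiteHull Φ e ∩ Iio (ℵ_ n).ord)
  have hσ (n : ℕ) (e : Finset Ordinal.{0}) : σ n e < alephOmegaOrd :=
    (csSup_le' fun _ ha => ha.2.le).trans_lt (ord_lt_ord.2 (aleph_lt_aleph.2 (natCast_lt_omega0 n)))
  have hclub := isClubFam_isClosedUnder σ hσ (aleph0_le_aleph nstar)
  rw [succ_aleph] at hclub
  obtain ⟨x, ⟨hxω, hxsize, hxcof⟩, -, -, hxσ⟩ := hstat _ hclub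
  have hyC : (⋃ e ∈ {e : Finset Ordinal.{0} | ↑e ⊆ x}, finiteHull Φ e) ∈ C :=
    iUnion_finset_mem_of_chainClosed hC.2.2 (finiteHull_mono hΦsub)
      (fun e he => hull_mem e (he.trans hxω))
      (hxsize.trans_lt (lift_lt.2 (aleph_lt_aleph.2 (by exact_mod_cast Nat.lt_succ_of_lt h1))))
  refine ⟨_, ⟨(hC.1 _ hyC).1, ?_, fun n ⟨hnX, hn⟩ => ?_⟩, hyC⟩
  · simpa only [← succ_aleph, Cardinal.lift_succ, Order.lt_succ_iff] using (hC.1 _ hyC).2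
  rw [hagree n hnX hn, ← hxcof n hnX]
  refine cofBelow_iUnion_eq (fun a _ => subset_finiteHull hΦsub {a} (by simp)) fun e he =>
    ⟨hxσ n e he, sSup_inter_Iio_ord_lt (isRegular_aleph_natCast n) ?_⟩
  exact (hC.1 _ (hull_mem e (he.trans hxω))).2.trans_le
    (lift_le.2 (aleph_le_aleph.2 (by exact_mod_cast hn)))

theorem stmt_9 (nstar nstar1 : ℕ) (X : Set ℕ) (hX : ∀ n ∈ X, nstar + 1 ≤ n)
    (f f1 : ℕ → ℕ) (hf : ∀ n ∈ X, f n ≤ nstar) (hf1 : ∀ n ∈ X, f1 n ≤ nstar1)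
    (h1 : nstar < nstar1)
    (hagree : ∀ n ∈ X, nstar1 + 1 ≤ n → f1 n = f n)
    (hstat : IsStatFam (SfGen nstar X f) alephOmegaOrd (Cardinal.aleph (nstar + 1))) :
    IsStatFam (SfGen nstar1 {n ∈ X | nstar1 < n} f1) alephOmegaOrd
      (Cardinal.aleph (nstar1 + 1)) :=
  stmt_9_general nstar nstar1 X f f1 h1 hagree hstat
end

section
/- Let λ be a successor of a regular cardinal, λ = μ⁺ with μ regular uncountable, and let κ < μ be a regular uncountable cardinal. Then there exists a sequence ⟨C_α : α < λ⟩ such that: (1) C_α ⊆ α and the order type of C_α is ≤ κ; (2) if β ∈ C_α then C_β = C_α ∩ β; (3) the set {α < λ : cf(α) = κ and α = sup(C_α)} is stationary in λ. -/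
/- Lemma 3.1 (for successors of regulars): let λ = μ⁺ with μ regular uncountable and
κ < μ regular uncountable.  Then there is ⟨C_α : α < λ⟩ with:
(1) C_α ⊆ α and otp(C_α) ≤ κ; (2) β ∈ C_α → C_β = C_α ∩ β;
(3) {α < λ : cf(α) = κ ∧ α = sup C_α} is stationary in λ.  (The C_α need not be closed.) -/
open Cardinal Set Ordinal

/-- `Cl` is closed unbounded in the ordinal `lam`. -/
def IsClubIn (Cl : Set Ordinal.{0}) (lam : Ordinal.{0}) : Prop :=
  Cl ⊆ Set.Iio lam ∧ (∀ β < lam, ∃ γ ∈ Cl, β < γ) ∧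
    ∀ s ⊆ Cl, s.Nonempty → sSup s < lam → sSup s ∈ Cl

def IsStatIn (S : Set Ordinal.{0}) (lam : Ordinal.{0}) : Prop :=
  ∀ Cl : Set Ordinal.{0}, IsClubIn Cl lam → (S ∩ Cl).Nonempty

/-!
For β < λ fix a map `e β` from μ onto β, with codes `d β` (`IsCoding`), and for J < μ let
`piece e J β` be the image of J below β, a set of size < μ. A point γ < α is good for J when the
J-piece of α restricted to γ is the J-piece of γ and γ is a limit of it. The good points form a
coherent system, with fewer than μ good points below each α. If cf δ = κ, closing some J < μ under
the κ many maps translating codes between δ and a cofinal family of limit points of a J-piece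
makes all those limit points good, so the good points are cofinal in δ. As λ = μ⁺ is regular,
J and the order type τ of the good points can be fixed on a stationary set of δ of cofinality κ.
Fix X ⊆ τ cofinal of order type κ and let C_α be the good points of α whose position among them
lies in X: this sequence is coherent, has order type ≤ κ, and sup C_δ = δ on the stationary set.
-/

open Order

universe u v

section OrderTypeBelow

variable {α : Type*} [LinearOrder α] [WellFoundedLT α] {A : Set α} {a b : α}

def otpBelow (A : Set α) (a : α) : Ordinal := typeLT ↥(A ∩ Iio a)

theorem otpBelow_eq_typein (x : ↥(A ∩ Iio b)) :
    otpBelow A x.1 = typein (α := ↥(A ∩ Iio b)) LT.lt x := by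
  rw [← type_Iio_lt]
  exact OrderIso.ordinalType_congr
    { toFun := fun y => ⟨⟨y.1, y.2.1, y.2.2.trans x.2.2⟩, y.2.2⟩
      invFun := fun y => ⟨y.1.1, y.1.2.1, y.2⟩
      left_inv := fun _ => rfl
      right_inv := fun _ => rfl
      map_rel_iff' := Iff.rfl }

theorem otpBelow_lt_otpBelow (ha : a ∈ A) (hab : a < b) : otpBelow A a < otpBelow A b :=
  (otpBelow_eq_typein (⟨a, ha, hab⟩ : ↥(A ∩ Iio b))).trans_lt (typein_lt_type _ _)

theorem otpBelow_mono (A : Set α) (hab : a ≤ b) : otpBelow A a ≤ otpBelow A b :=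
  type_mono (inter_subset_inter_right A (Iio_subset_Iio hab))

theorem exists_otpBelow_eq {o : Ordinal} (ho : o < otpBelow A b) :
    ∃ a ∈ A, a < b ∧ otpBelow A a = o := by
  obtain ⟨x, rfl⟩ := typein_surj _ ho
  exact ⟨x.1, x.2.1, x.2.2, otpBelow_eq_typein x⟩

theorem otpBelow_inter_Iio (A : Set α) (hab : a ≤ b) : otpBelow (A ∩ Iio b) a = otpBelow A a :=
  (OrderIso.setCongr _ _ (by rw [inter_assoc, Iio_inter_Iio, min_eq_right hab])).ordinalType_congr

theorem card_otpBelow (A : Set α) (a : α) : (otpBelow A a).card = #↥(A ∩ Iio a) :=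
  card_type _

end OrderTypeBelow

def IsLimitPointOf (A : Set Ordinal.{u}) (γ : Ordinal.{u}) : Prop :=
  ∀ b < γ, (A ∩ Ioo b γ).Nonempty

theorem IsLimitPointOf.mono {A B : Set Ordinal.{u}} {γ : Ordinal.{u}} (h : A ⊆ B)
    (hγ : IsLimitPointOf A γ) : IsLimitPointOf B γ :=
  fun b hb => (hγ b hb).mono (inter_subset_inter_left _ h)

theorem mk_setOf_isLimitPointOf_le (A : Set Ordinal.{u}) :
    #{γ | IsLimitPointOf A γ} ≤ #A + 1 := by
  classical
  rw [← mk_option]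
  let next : Ordinal → Option A := fun γ =>
    if h : (A ∩ Ici γ).Nonempty then some ⟨sInf (A ∩ Ici γ), (csInf_mem h).1⟩ else none
  refine mk_le_of_injective (f := fun γ : {γ | IsLimitPointOf A γ} => next γ)
    (Function.Injective.of_lt_imp_ne ?_)
  -- a point of `A` between two limit points separates the least points of `A` above them
  rintro ⟨γ₁, -⟩ ⟨γ₂, hγ₂⟩ (h12 : γ₁ < γ₂)
  obtain ⟨x, hxA, h1x, hx2⟩ := hγ₂ γ₁ h12
  have hx : x ∈ A ∩ Ici γ₁ := ⟨hxA, h1x.le⟩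
  have hne : (A ∩ Ici γ₁).Nonempty := ⟨x, hx⟩
  have hlt : sInf (A ∩ Ici γ₁) < γ₂ := (csInf_le' hx).trans_lt hx2
  simp only [next, dif_pos hne]
  split_ifs with h2
  · simpa using (hlt.trans_le (le_csInf h2 fun y hy => hy.2)).ne
  · exact Option.some_ne_none _

theorem exists_isLimitPointOf {δ : Ordinal.{u}} (hδ : ℵ₀ < δ.cof) {A : Set Ordinal.{u}}
    (hA : ∀ b < δ, ∃ x ∈ A, b ≤ x ∧ x < δ) {b : Ordinal.{u}} (hb : b < δ) :
    ∃ γ, b < γ ∧ γ < δ ∧ IsLimitPointOf A γ := by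
  have hlim : IsSuccLimit δ := one_lt_cof_iff.1 (one_lt_aleph0.trans hδ)
  have hnext : ∀ a, ∃ x, a < δ → x ∈ A ∧ a < x ∧ x < δ := fun a => by
    by_cases ha : a < δ
    · obtain ⟨x, hx, hax, hxδ⟩ := hA (a + 1) (hlim.add_one_lt ha)
      exact ⟨x, fun _ => ⟨hx, (lt_add_one a).trans_le hax, hxδ⟩⟩
    · exact ⟨0, fun h => absurd h ha⟩
  choose nx hnx using hnext
  have hiter : ∀ n, nx^[n] b < δ := fun n => by
    induction n with
    | zero => exact hb
    | succ n ih => rw [Function.iterate_succ_apply']; exact (hnx _ ih).2.2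
  have hstep : ∀ n, nx^[n] b < nx^[n + 1] b := fun n => by
    rw [Function.iterate_succ_apply']; exact (hnx _ (hiter n)).2.1
  refine ⟨nfp nx b, (hstep 0).trans_le (iterate_le_nfp nx b 1),
    nfp_lt_ord hδ (fun a ha => (hnx a ha).2.2) hb, fun c hc => ?_⟩
  obtain ⟨n, hn⟩ := lt_nfp_iff.1 hc
  refine ⟨nx^[n + 1] b, ?_, hn.trans (hstep n), (hstep (n + 1)).trans_le (iterate_le_nfp nx b _)⟩
  rw [Function.iterate_succ_apply']
  exact (hnx _ (hiter n)).1

theorem exists_strictMono_cofinal {δ : Ordinal.{u}} {S : Set Ordinal.{u}}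
    (hS : ∀ b < δ, ∃ s ∈ S, b ≤ s ∧ s < δ) :
    ∃ g : Iio δ.cof.ord → Ordinal.{u},
      StrictMono g ∧ (∀ i, g i ∈ S ∧ g i < δ) ∧ ∀ b < δ, ∃ i, b ≤ g i := by
  obtain ⟨t, hts, htc, htype⟩ := exists_ord_cof_eq_of_isCofinal (s := {x : Iio δ | x.1 ∈ S})
    fun x => by
      obtain ⟨s, hs, hxs, hsδ⟩ := hS x.1 x.2
      exact ⟨⟨s, hsδ⟩, hs, hxs⟩
  have : typeLT (Iio δ.cof.ord) = typeLT t := by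
    rw [htype, cof_Iio, ← lift_cof, ← lift_ord, type_lt_Iio]
  let φ := OrderIso.ofRelIsoLT (type_eq.1 this).some
  refine ⟨fun i => (φ i).1.1, fun i j hij => φ.strictMono hij,
    fun i => ⟨hts (φ i).2, (φ i).1.2⟩, fun b hb => ?_⟩
  obtain ⟨y, hy, hby⟩ := htc ⟨b, hb⟩
  exact ⟨φ.symm ⟨y, hy⟩, by simpa using (show b ≤ y.1 from hby)⟩

theorem exists_closed_lt_ord {c : Cardinal.{u}} (hc : c.IsRegular) (hc₀ : c ≠ ℵ₀) {ι : Type u}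
    (hι : #ι < c) {h : ι → Ordinal.{u} → Ordinal.{u}} (hh : ∀ i, ∀ ξ < c.ord, h i ξ < c.ord)
    {j : Ordinal.{u}} (hj : j < c.ord) : ∃ J, j ≤ J ∧ J < c.ord ∧ ∀ i, ∀ ξ < J, h i ξ < J := by
  -- a common fixed point of the monotone hulls `H i` of the `h i` is closed under every `h i`
  let H : ι → Ordinal → Ordinal := fun i a => ⨆ ξ : Iio a, h i ξ + 1
  have hH : ∀ i, ∀ a < c.ord, H i a < c.ord := by
    intro i a ha
    refine lift_iSup_lt_of_lt_cof ?_
      fun ξ => (isSuccLimit_ord hc.aleph0_le).add_one_lt (hh i ξ (ξ.2.trans ha))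
    rw [Cardinal.mk_Iio_ordinal, ← lift_cof, hc.cof_ord, Cardinal.lift_lift]
    exact Cardinal.lift_lt.2 (lt_ord.1 ha)
  refine ⟨nfpFamily H j, le_nfpFamily H j, nfpFamily_lt_ord_of_isRegular hc hι hc₀ hH hj,
    fun i ξ hξ => ?_⟩
  obtain ⟨l, hl⟩ := lt_nfpFamily_iff.1 hξ
  calc h i ξ < h i ξ + 1 := lt_add_one _
    _ ≤ H i (List.foldr H j l) := Ordinal.le_iSup (fun ξ' : Iio _ => h i ξ' + 1) ⟨ξ, hl⟩
    _ ≤ nfpFamily H j := foldr_le_nfpFamily H j (i :: l)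

section Selection

variable {P : Ordinal.{u} → Set Ordinal.{u}} {X : Set Ordinal.{u + 1}} {α β δ : Ordinal.{u}}

def IsCoherent (P : Ordinal.{u} → Set Ordinal.{u}) : Prop :=
  ∀ α, ∀ β ∈ P α, P β = P α ∩ Iio β

def selectByOtp (P : Ordinal.{u} → Set Ordinal.{u}) (X : Set Ordinal.{u + 1}) (α : Ordinal.{u}) :
    Set Ordinal.{u} :=
  {γ ∈ P α | otpBelow (P α) γ ∈ X}

theorem IsCoherent.selectByOtp_eq_inter (hP : IsCoherent P) (hβ : β ∈ selectByOtp P X α) :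
    selectByOtp P X β = selectByOtp P X α ∩ Iio β := by
  ext γ
  simp only [selectByOtp, mem_sep_iff, mem_inter_iff, mem_Iio, hP α β hβ.1]
  constructor
  · rintro ⟨⟨hγ, hγβ⟩, hX⟩
    exact ⟨⟨hγ, by rwa [otpBelow_inter_Iio _ hγβ.le] at hX⟩, hγβ⟩
  · rintro ⟨⟨hγ, hX⟩, hγβ⟩
    exact ⟨⟨hγ, hγβ⟩, by rwa [otpBelow_inter_Iio _ hγβ.le]⟩

theorem type_selectByOtp_range_le {o : Ordinal.{u}} {x : Iio o → Ordinal.{u + 1}}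
    (hx : StrictMono x) (α : Ordinal.{u}) :
    typeLT ↥(selectByOtp P (range x) α) ≤ Ordinal.lift.{u + 1} o := by
  choose idx hidx using fun γ : ↥(selectByOtp P (range x) α) => γ.2.2
  have hidx_mono : StrictMono idx := fun γ γ' h =>
    hx.lt_iff_lt.1 (by rw [hidx, hidx]; exact otpBelow_lt_otpBelow γ.2.1 h)
  rw [← type_lt_Iio]
  exact (OrderEmbedding.ofStrictMono idx hidx_mono).ltEmbedding.ordinal_type_le

theorem sSup_selectByOtp {o : Ordinal.{u}} {x : Iio o → Ordinal.{u + 1}} {τ : Ordinal.{u + 1}}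
    (hPδ : P δ ⊆ Iio δ) (hP : ∀ b < δ, ∃ p ∈ P δ, b < p) (hτ : otpBelow (P δ) δ = τ)
    (hxτ : ∀ i, x i < τ) (hxcof : ∀ q < τ, ∃ i, q ≤ x i) :
    sSup (selectByOtp P (range x) δ) = δ := by
  subst hτ
  have hcof : ∀ b < δ, ∃ γ ∈ selectByOtp P (range x) δ, b < γ := by
    intro b hb
    obtain ⟨p, hp, hbp⟩ := hP b hb
    obtain ⟨i, hi⟩ := hxcof _ (otpBelow_lt_otpBelow hp (hPδ hp))
    obtain ⟨γ, hγ, -, hγi⟩ := exists_otpBelow_eq (hxτ i)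
    refine ⟨γ, ⟨hγ, i, hγi.symm⟩, hbp.trans_le (le_of_not_gt fun hγp => ?_)⟩
    exact (hi.trans_eq hγi.symm).not_gt (otpBelow_lt_otpBelow hγ hγp)
  have hbdd : BddAbove (selectByOtp P (range x) δ) := ⟨δ, fun γ hγ => (hPδ hγ.1).le⟩
  refine le_antisymm (csSup_le' fun γ hγ => (hPδ hγ.1).le) (le_of_forall_lt fun b hb => ?_)
  obtain ⟨γ, hγ, hbγ⟩ := hcof b hb
  exact hbγ.trans_le (le_csSup hbdd hγ)

end Selection

section GoodPoints

variable {μ : Cardinal.{u}} {e d : Ordinal.{u} → Ordinal.{u} → Ordinal.{u}}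
  {J J' α β γ δ x : Ordinal.{u}}

def IsCoding (μ : Cardinal.{u}) (β : Ordinal.{u}) (e d : Ordinal.{u} → Ordinal.{u}) : Prop :=
  (∀ x, d x < μ.ord) ∧ ∀ x < β, e (d x) = x

theorem exists_isCoding (hμ : μ ≠ 0) (hβ : β.card ≤ μ) : ∃ e d, IsCoding μ β e d := by
  obtain ⟨ι⟩ : Nonempty (Iio β ↪ Iio μ.ord) := by
    rw [← Cardinal.le_def, Cardinal.mk_Iio_ordinal, Cardinal.mk_Iio_ordinal, card_ord]
    exact Cardinal.lift_le.2 hβ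
  let d : Ordinal → Ordinal := fun x => if h : x < β then ι ⟨x, h⟩ else 0
  have hd : InjOn d (Iio β) := fun x hx y hy hxy => by
    simp only [d, dif_pos (show x < β from hx), dif_pos (show y < β from hy)] at hxy
    exact congrArg Subtype.val (ι.injective (Subtype.ext hxy))
  refine ⟨Function.invFunOn d (Iio β), d, fun x => ?_, fun x hx => hd.leftInvOn_invFunOn hx⟩
  simp only [d]
  split_ifs
  · exact (ι _).2
  · exact ord_pos.2 (pos_iff_ne_zero.2 hμ)

def piece (e : Ordinal.{u} → Ordinal.{u} → Ordinal.{u}) (J α : Ordinal.{u}) : Set Ordinal.{u} :=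
  e α '' Iio J ∩ Iio α

def goodPoints (e : Ordinal.{u} → Ordinal.{u} → Ordinal.{u}) (J α : Ordinal.{u}) :
    Set Ordinal.{u} :=
  {γ | γ < α ∧ piece e J α ∩ Iio γ = piece e J γ ∧ IsLimitPointOf (piece e J γ) γ}

theorem piece_mono (hJ : J ≤ J') : piece e J α ⊆ piece e J' α :=
  inter_subset_inter_left _ (image_mono (Iio_subset_Iio hJ))

theorem mem_piece (hc : IsCoding μ α (e α) (d α)) (hx : x < α) (hdx : d α x < J) :
    x ∈ piece e J α :=
  ⟨⟨d α x, hdx, hc.2 x hx⟩, hx⟩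

theorem piece_inter_Iio_eq (hγδ : γ < δ) (hδ : IsCoding μ δ (e δ) (d δ))
    (hγ : IsCoding μ γ (e γ) (d γ)) (hJ : ∀ ξ < J, d γ (e δ ξ) < J ∧ d δ (e γ ξ) < J) :
    piece e J δ ∩ Iio γ = piece e J γ := by
  ext x
  constructor
  · rintro ⟨⟨⟨ξ, hξ, rfl⟩, -⟩, hxγ⟩
    exact mem_piece hγ hxγ (hJ ξ hξ).1
  · rintro ⟨⟨ξ, hξ, rfl⟩, hxγ⟩
    exact ⟨mem_piece hδ (hxγ.trans hγδ) (hJ ξ hξ).2, hxγ⟩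

theorem goodPoints_subset_Iio : goodPoints e J α ⊆ Iio α := fun _ h => h.1

theorem isCoherent_goodPoints : IsCoherent (goodPoints e J) := by
  intro α β hβ
  ext γ
  constructor
  · rintro ⟨hγβ, hmesh, hlim⟩
    refine ⟨⟨hγβ.trans hβ.1, ?_, hlim⟩, hγβ⟩
    rw [← hmesh, ← hβ.2.1, inter_assoc, Iio_inter_Iio, min_eq_right hγβ.le]
  · rintro ⟨⟨-, hmesh, hlim⟩, hγβ : γ < β⟩
    refine ⟨hγβ, ?_, hlim⟩
    rw [← hmesh, ← hβ.2.1, inter_assoc, Iio_inter_Iio, min_eq_right hγβ.le]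

theorem mk_piece_lt (hJ : J < μ.ord) : #(piece e J α) < Cardinal.lift.{u + 1} μ :=
  calc #(piece e J α) ≤ #(Iio J) := (mk_le_mk_of_subset inter_subset_left).trans mk_image_le
    _ < Cardinal.lift.{u + 1} μ := by
      rw [Cardinal.mk_Iio_ordinal]; exact Cardinal.lift_lt.2 (lt_ord.1 hJ)

theorem mk_goodPoints_lt (hμ : ℵ₀ ≤ μ) (hJ : J < μ.ord) :
    #(goodPoints e J α) < Cardinal.lift.{u + 1} μ :=
  calc #(goodPoints e J α) ≤ #{γ | IsLimitPointOf (piece e J α) γ} :=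
        mk_le_mk_of_subset fun _ hγ => hγ.2.2.mono (hγ.2.1 ▸ inter_subset_left)
    _ ≤ #(piece e J α) + 1 := mk_setOf_isLimitPointOf_le _
    _ < Cardinal.lift.{u + 1} μ :=
        add_lt_of_lt (aleph0_le_lift.2 hμ) (mk_piece_lt hJ)
          (one_lt_aleph0.trans_le (aleph0_le_lift.2 hμ))

theorem otpBelow_goodPoints_lt (hμ : ℵ₀ ≤ μ) (hJ : J < μ.ord) :
    otpBelow (goodPoints e J δ) δ < (Cardinal.lift.{u + 1} μ).ord :=
  lt_ord.2 (((card_otpBelow _ _).trans_le (mk_le_mk_of_subset inter_subset_left)).trans_lt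
    (mk_goodPoints_lt hμ hJ))

theorem exists_cofinal_goodPoints (hμ : μ.IsRegular) (hδω : ℵ₀ < δ.cof) (hδμ : δ.cof < μ)
    (hδ : δ.card ≤ μ) (hed : ∀ β, β.card ≤ μ → IsCoding μ β (e β) (d β)) :
    ∃ J < μ.ord, ∀ b < δ, ∃ γ ∈ goodPoints e J δ, b < γ := by
  have hcodes : ∀ γ ≤ δ, IsCoding μ γ (e γ) (d γ) :=
    fun γ hγ => hed γ ((card_le_card hγ).trans hδ)
  obtain ⟨s, hs, hscard⟩ := Order.exists_cof_eq δ.ToType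
  rw [cof_toType] at hscard
  let f : s → Ordinal := fun y => (ToType.mk.symm y.1).1
  have hfδ : ∀ y, f y < δ := fun y => (ToType.mk.symm y.1).2
  have hfcof : ∀ b < δ, ∃ y, b ≤ f y := by
    intro b hb
    obtain ⟨y, hy, hby⟩ := hs (ToType.mk ⟨b, hb⟩)
    exact ⟨⟨y, hy⟩, ToType.mk.le_symm_apply.2 hby⟩
  obtain ⟨j₀, hj₀, hfj₀⟩ : ∃ j₀ < μ.ord, ∀ y, d δ (f y) < j₀ :=
    ⟨⨆ y, d δ (f y) + 1, Ordinal.iSup_lt_of_lt_cof (by rw [hμ.cof_ord]; exact hscard.trans_lt hδμ)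
        fun y => (isSuccLimit_ord hμ.aleph0_le).add_one_lt ((hcodes δ le_rfl).1 _),
      fun y => (lt_add_one _).trans_le (Ordinal.le_iSup (fun y => d δ (f y) + 1) y)⟩
  have hA : ∀ b < δ, ∃ z ∈ piece e j₀ δ, b ≤ z ∧ z < δ := fun b hb =>
    let ⟨y, hy⟩ := hfcof b hb
    ⟨f y, mem_piece (hcodes δ le_rfl) (hfδ y) (hfj₀ y), hy, hfδ y⟩
  choose γ hfγ hγδ hγlim using fun y => exists_isLimitPointOf hδω hA (hfδ y)
  -- `J` is closed under the maps translating codes for `δ` into codes for each `γ y` and back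
  obtain ⟨J, hj₀J, hJ, hJclosed⟩ := exists_closed_lt_ord hμ (hδω.trans hδμ).ne'
    (hscard.trans_lt hδμ) (h := fun y ξ => max (d (γ y) (e δ ξ)) (d δ (e (γ y) ξ)))
    (fun y ξ _ => max_lt ((hcodes _ (hγδ y).le).1 _) ((hcodes δ le_rfl).1 _)) hj₀
  refine ⟨J, hJ, fun b hb => ?_⟩
  obtain ⟨y, hy⟩ := hfcof b hb
  have hmesh := piece_inter_Iio_eq (hγδ y) (hcodes δ le_rfl) (hcodes _ (hγδ y).le)
    fun ξ hξ => max_lt_iff.1 (hJclosed y ξ hξ)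
  have hsub : piece e j₀ δ ∩ Iio (γ y) ⊆ piece e J (γ y) :=
    hmesh ▸ inter_subset_inter_left _ (piece_mono hj₀J)
  refine ⟨γ y, ⟨hγδ y, hmesh, fun c hc => ?_⟩, hy.trans_lt (hfγ y)⟩
  obtain ⟨z, hz, hcz, hzγ⟩ := hγlim y c hc
  exact ⟨z, hsub ⟨hz, hzγ⟩, hcz, hzγ⟩

end GoodPoints

section Stationary

variable {lam : Ordinal.{0}} {S Cl : Set Ordinal.{0}}

theorem isLUB_coe_image_iff {α : Type*} [LinearOrder α] {b : α} {d : Set (Iio b)} {a : Iio b} :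
    IsLUB (Subtype.val '' d) a.1 ↔ IsLUB d a := by
  refine ⟨IsLUB.of_image Subtype.coe_le_coe, fun h => ⟨?_, fun u hu => ?_⟩⟩
  · rintro _ ⟨y, hy, rfl⟩
    exact h.1 hy
  · by_contra! hua
    have : a ≤ ⟨u, hua.trans a.2⟩ := h.2 fun y hy => (hu ⟨y, hy, rfl⟩ : y.1 ≤ u)
    exact hua.not_ge this

theorem IsClubIn.isClub_preimage (hCl : IsClubIn Cl lam) : IsClub {x : Iio lam | x.1 ∈ Cl} := by
  refine ⟨dirSupClosed_iff_of_linearOrder.2 fun d hd hne a ha => ?_, fun a => ?_⟩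
  · have hsup : sSup (Subtype.val '' d) = a.1 := (isLUB_coe_image_iff.2 ha).csSup_eq (hne.image _)
    have := hCl.2.2 _ (by rintro _ ⟨y, hy, rfl⟩; exact hd hy) (hne.image _) (hsup ▸ a.2)
    rwa [hsup] at this
  · obtain ⟨γ, hγ, haγ⟩ := hCl.2.1 a.1 a.2
    exact ⟨⟨γ, hCl.1 hγ⟩, hγ, haγ.le⟩

theorem IsClub.isClubIn_image (hlam : IsSuccLimit lam) {t : Set (Iio lam)} (ht : IsClub t) :
    IsClubIn (Subtype.val '' t) lam := by
  refine ⟨fun _ ⟨y, _, hy⟩ => hy ▸ y.2, fun β hβ => ?_, fun s hs hne hlt => ?_⟩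
  · obtain ⟨y, hy, hβy⟩ := ht.isCofinal ⟨β + 1, hlam.add_one_lt hβ⟩
    exact ⟨y.1, ⟨y, hy, rfl⟩, (lt_add_one β).trans_le hβy⟩
  · have hsIio : s ⊆ Iio lam := fun z hz => by obtain ⟨y, -, rfl⟩ := hs hz; exact y.2
    have hs' : Subtype.val '' {x : Iio lam | x.1 ∈ s} = s := by
      ext z
      exact ⟨fun ⟨y, hy, hyz⟩ => hyz ▸ hy, fun hz => ⟨⟨z, hsIio hz⟩, hz, rfl⟩⟩
    have hlub : IsLUB {x : Iio lam | x.1 ∈ s} ⟨sSup s, hlt⟩ := by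
      rw [← isLUB_coe_image_iff, hs']
      exact isLUB_csSup hne ⟨lam, fun z hz => (hsIio hz).le⟩
    refine ⟨_, ht.isLUB_mem (fun x hx => ?_) ?_ hlub, rfl⟩
    · obtain ⟨y, hy, hyx⟩ := hs hx
      exact Subtype.ext hyx ▸ hy
    · obtain ⟨z, hz⟩ := hne
      exact ⟨⟨z, hsIio hz⟩, hz⟩

theorem isStatIn_iff_isStationary (hlam : IsSuccLimit lam) :
    IsStatIn S lam ↔ IsStationary {x : Iio lam | x.1 ∈ S} := by
  refine ⟨fun hS t ht => ?_, fun hS Cl hCl => ?_⟩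
  · obtain ⟨_, hδS, y, hy, rfl⟩ := hS _ (ht.isClubIn_image hlam)
    exact ⟨y, hδS, hy⟩
  · obtain ⟨y, hyS, hyCl⟩ := hS hCl.isClub_preimage
    exact ⟨y.1, hyS, hyCl⟩

theorem IsStatIn.nonempty (hlam : IsSuccLimit lam) (hS : IsStatIn S lam) : S.Nonempty :=
  let ⟨y, hy⟩ := ((isStatIn_iff_isStationary hlam).1 hS).nonempty
  ⟨y.1, hy⟩

theorem IsStatIn.exists_isStatIn_setOf {β : Type v} (hlam : ℵ₀ < lam.cof)
    (hS : IsStatIn S lam) {V : Set β} (hV : #V < Cardinal.lift.{v} lam.cof)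
    {R : Ordinal.{0} → β → Prop} (hR : ∀ δ ∈ S, ∃ v ∈ V, R δ v) :
    ∃ v ∈ V, IsStatIn {δ | δ ∈ S ∧ R δ v} lam := by
  have hlim : IsSuccLimit lam := one_lt_cof_iff.1 (one_lt_aleph0.trans hlam)
  have hcof : Order.cof (Iio lam) = Cardinal.lift.{1} lam.cof := by rw [cof_Iio, lift_cof]
  have hU : {x : Iio lam | x.1 ∈ S} = ⋃ v : V, {x : Iio lam | x.1 ∈ {δ | δ ∈ S ∧ R δ v}} := by
    ext x
    simp only [mem_iUnion, Subtype.exists, exists_prop]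
    exact ⟨fun h => let ⟨v, hv, hRv⟩ := hR _ h; ⟨v, hv, h, hRv⟩, fun ⟨_, _, h, _⟩ => h⟩
  have hVcof : Cardinal.lift.{1} #V < Cardinal.lift.{v} (Order.cof (Iio lam)) := by
    rw [hcof, Cardinal.lift_lift]
    exact (Cardinal.lift_lt.2 hV).trans_eq (Cardinal.lift_lift _)
  rw [isStatIn_iff_isStationary hlim, hU,
    isStationary_iUnion_iff (by rw [hcof]; exact (aleph0_lt_lift.2 hlam).ne') hVcof] at hS
  obtain ⟨⟨v, hv⟩, h⟩ := hS
  exact ⟨v, hv, (isStatIn_iff_isStationary hlim).2 h⟩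

theorem exists_mem_cof_eq {κ : Cardinal.{0}} (hκ : κ.IsRegular) (hκlam : κ < lam.cof)
    (hCl : IsClubIn Cl lam) : ∃ p ∈ Cl, p.cof = κ := by
  obtain ⟨g, hg, hgCl, -⟩ := exists_strictMono_cofinal fun b hb =>
    let ⟨γ, hγ, hbγ⟩ := hCl.2.1 b hb
    ⟨γ, hγ, hbγ.le, hCl.1 hγ⟩
  have hκ' : κ.ord < lam.cof.ord := ord_lt_ord.2 hκlam
  let h : Iio κ.ord → Ordinal := fun i : Iio κ.ord => g ⟨i.1, i.2.trans hκ'⟩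
  have hh : StrictMono h := fun i j hij => hg hij
  have hsup : ⨆ i, h i < lam := (Ordinal.iSup_le fun i : Iio κ.ord =>
    (hg (show (⟨i.1, i.2.trans hκ'⟩ : Iio lam.cof.ord) < ⟨κ.ord, hκ'⟩ from i.2)).le).trans_lt
      (hgCl _).2
  have : Nonempty (Iio κ.ord) := ⟨⟨0, hκ.ord_pos⟩⟩
  refine ⟨⨆ i, h i, ?_, ?_⟩
  · rw [← sSup_range] at hsup ⊢
    exact hCl.2.2 _ (range_subset_iff.2 fun i => (hgCl _).1) (range_nonempty h) hsup
  · rw [cof_iSup_Iio hh (isSuccLimit_ord hκ.aleph0_le).isSuccPrelimit, hκ.cof_ord]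

theorem isStatIn_setOf_cof_eq {κ : Cardinal.{0}} (hκ : κ.IsRegular) (hκlam : κ < lam.cof) :
    IsStatIn {δ | δ < lam ∧ δ.cof = κ} lam := fun _ hCl =>
  let ⟨p, hp, hpκ⟩ := exists_mem_cof_eq hκ hκlam hCl
  ⟨p, ⟨hCl.1 hp, hpκ⟩, hp⟩

end Stationary

theorem exists_isStatIn_uniform_goodPoints {μ κ : Cardinal.{0}} (hμ : μ.IsRegular)
    (hκ : κ.IsRegular) (hκu : ℵ₀ < κ) (hκμ : κ < μ) {e d : Ordinal → Ordinal → Ordinal}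
    (hed : ∀ β, β.card ≤ μ → IsCoding μ β (e β) (d β)) :
    ∃ J τ S, IsStatIn S (succ μ).ord ∧ ∀ δ ∈ S, δ < (succ μ).ord ∧ δ.cof = κ ∧
      (∀ b < δ, ∃ γ ∈ goodPoints e J δ, b < γ) ∧ otpBelow (goodPoints e J δ) δ = τ := by
  have hcof : (succ μ).ord.cof = succ μ := (isRegular_succ hμ.aleph0_le).cof_ord
  have hlamω : ℵ₀ < (succ μ).ord.cof := by rw [hcof]; exact (hκu.trans hκμ).trans (lt_succ μ)
  have hT := isStatIn_setOf_cof_eq hκ (lam := (succ μ).ord)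
    (by rw [hcof]; exact hκμ.trans (lt_succ μ))
  obtain ⟨J, hJ, hS₁⟩ := hT.exists_isStatIn_setOf hlamω (V := Iio μ.ord)
    (R := fun δ J => ∀ b < δ, ∃ γ ∈ goodPoints e J δ, b < γ) (by simp [hcof]) fun δ hδ =>
      exists_cofinal_goodPoints hμ (hδ.2 ▸ hκu) (hδ.2 ▸ hκμ) (lt_succ_iff.1 (lt_ord.1 hδ.1)) hed
  obtain ⟨τ, -, hS₂⟩ := hS₁.exists_isStatIn_setOf hlamω (V := Iio (Cardinal.lift.{1} μ).ord)
    (R := fun δ τ => otpBelow (goodPoints e J δ) δ = τ) (by simp [hcof])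
    fun δ _ => ⟨_, otpBelow_goodPoints_lt hμ.aleph0_le hJ, rfl⟩
  exact ⟨J, τ, _, hS₂, fun δ hδ => ⟨hδ.1.1.1, hδ.1.1.2, hδ.1.2, hδ.2⟩⟩

theorem exists_strictMono_cofinal_otpBelow {P : Set Ordinal.{u}} {δ : Ordinal.{u}}
    {κ : Cardinal.{u}} {τ : Ordinal.{u + 1}} (hδ : δ.cof = κ) (hPδ : P ⊆ Iio δ)
    (hP : ∀ b < δ, ∃ p ∈ P, b < p) (hτ : otpBelow P δ = τ) :
    ∃ x : Iio κ.ord → Ordinal.{u + 1}, StrictMono x ∧ (∀ i, x i < τ) ∧ ∀ q < τ, ∃ i, q ≤ x i := by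
  subst hδ hτ
  obtain ⟨g, hg, hgP, hgcof⟩ := exists_strictMono_cofinal fun b hb =>
    let ⟨p, hp, hbp⟩ := hP b hb
    ⟨p, hp, hbp.le, hPδ hp⟩
  refine ⟨fun i => otpBelow P (g i), fun i j hij => otpBelow_lt_otpBelow (hgP i).1 (hg hij),
    fun i => otpBelow_lt_otpBelow (hgP i).1 (hgP i).2, fun q hq => ?_⟩
  obtain ⟨a, -, haδ, rfl⟩ := exists_otpBelow_eq hq
  obtain ⟨i, hi⟩ := hgcof a haδ
  exact ⟨i, otpBelow_mono P hi⟩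

theorem stmt_11_general (μ κ : Cardinal.{0})
    (hμ : μ.IsRegular)
    (hκ : κ.IsRegular) (hκu : ℵ₀ < κ) (hκμ : κ < μ) :
    ∃ C : Ordinal.{0} → Set Ordinal.{0},
      (∀ α < (Order.succ μ).ord, C α ⊆ Set.Iio α ∧
        Ordinal.type (α := ↥(C α)) (· < ·) ≤ Ordinal.lift.{1,0} κ.ord) ∧
      (∀ α < (Order.succ μ).ord, ∀ β ∈ C α, C β = C α ∩ Set.Iio β) ∧
      IsStatIn {α : Ordinal.{0} | α < (Order.succ μ).ord ∧ α.cof = κ ∧ α = sSup (C α)}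
        (Order.succ μ).ord := by
  choose! e d hed using fun (β : Ordinal) (hβ : β.card ≤ μ) => exists_isCoding hμ.pos.ne' hβ
  obtain ⟨J, τ, S, hS, hSgood⟩ := exists_isStatIn_uniform_goodPoints hμ hκ hκu hκμ hed
  obtain ⟨δ₀, hδ₀⟩ := hS.nonempty (isSuccLimit_ord (hμ.aleph0_le.trans (le_succ μ)))
  obtain ⟨-, hδ₀κ, hδ₀cof, hδ₀τ⟩ := hSgood δ₀ hδ₀
  obtain ⟨x, hx, hxτ, hxcof⟩ :=
    exists_strictMono_cofinal_otpBelow hδ₀κ goodPoints_subset_Iio hδ₀cof hδ₀τ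
  refine ⟨selectByOtp (goodPoints e J) (range x),
    fun α _ => ⟨fun γ hγ => hγ.1.1, type_selectByOtp_range_le hx α⟩,
    fun α _ β hβ => isCoherent_goodPoints.selectByOtp_eq_inter hβ, fun Cl hCl => ?_⟩
  obtain ⟨δ, hδS, hδCl⟩ := hS Cl hCl
  obtain ⟨hδlam, hδκ, hδcof, hδτ⟩ := hSgood δ hδS
  exact ⟨δ, ⟨hδlam, hδκ, (sSup_selectByOtp goodPoints_subset_Iio hδcof hδτ hxτ hxcof).symm⟩, hδCl⟩

theorem stmt_11 (μ κ : Cardinal.{0})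
    (hμ : μ.IsRegular) (hμu : ℵ₀ < μ)
    (hκ : κ.IsRegular) (hκu : ℵ₀ < κ) (hκμ : κ < μ) :
    ∃ C : Ordinal.{0} → Set Ordinal.{0},
      (∀ α < (Order.succ μ).ord, C α ⊆ Set.Iio α ∧
        Ordinal.type (α := ↥(C α)) (· < ·) ≤ Ordinal.lift.{1,0} κ.ord) ∧
      (∀ α < (Order.succ μ).ord, ∀ β ∈ C α, C β = C α ∩ Set.Iio β) ∧
      IsStatIn {α : Ordinal.{0} | α < (Order.succ μ).ord ∧ α.cof = κ ∧ α = sSup (C α)}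
        (Order.succ μ).ord :=
  stmt_11_general μ κ hμ hκ hκu hκμ
end
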